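/- For odd positive integers $i < j \le n$, the polynomials $h^n_{n-i}$ and $h^n_{n-j}$ defined by $h^n_{n-i}(t) = \sum_{k=0}^n d^i_{n,k} t^k$ with $d^i_{n,k} = (-1)^n \frac{\sqrt{2n-2i+1}}{(-n)_i} \frac{(-n)_k (n-i+1)_k}{(k!)^2} \prod_{m=0}^{(i-1)/2}(n+k+1-2m) \prod_{m=0}^{(i-3)/2}(n-k-1-2m)$ satisfy $\int_0^1 h^n_{n-i}(t) h^n_{n-j}(t)\,dt = 0$. -/

import Mathlib

open Finset

/-- Pochhammer symbol `(x)_k = x (x+1) ⋯ (x+k-1)`. -/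
noncomputable def poch (x : ℝ) (k : ℕ) : ℝ := (ascPochhammer ℝ k).eval x

/-- The coefficient `d^i_{n,k}` (for odd `i`): the product
`∏_{m=0}^{(i-1)/2}` has `(i+1)/2` factors and `∏_{m=0}^{(i-3)/2}` has `(i-1)/2` factors. -/
noncomputable def d (n i k : ℕ) : ℝ :=
  (-1) ^ n * Real.sqrt (2 * (n : ℝ) - 2 * i + 1) / poch (-(n : ℝ)) i *
    (poch (-(n : ℝ)) k * poch ((n : ℝ) - i + 1) k / ((k.factorial : ℝ)) ^ 2) *
    (∏ m ∈ Finset.range ((i + 1) / 2), ((n : ℝ) + k + 1 - 2 * m)) *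
    (∏ m ∈ Finset.range ((i - 1) / 2), ((n : ℝ) - k - 1 - 2 * m))

/-- The wavelet polynomial `h^n_{n-i}(t) = ∑_{k=0}^n d^i_{n,k} t^k` on `[0,1)`. -/
noncomputable def h (n i : ℕ) (t : ℝ) : ℝ := ∑ k ∈ Finset.range (n + 1), d n i k * t ^ k

/-! The coefficients factor as `d n i k = c · (-1)^k C(n,k) R(k)` with `R` a real polynomial of
degree at most `n`. Hence `∫₀¹ t^s h^n_{n-i}(t) dt = c · ∑ₖ (-1)^k C(n,k) R(k) / (k + s + 1)`, and
whenever `-(s+1)` is a root of `R` this is, up to sign, the `n`-th forward difference of the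
polynomial `R(x) / (x + s + 1)` of degree `< n`, so it vanishes. The linear factors of `R` make
this happen for `s < n - i` and for `n - i < s ≤ n` with `s ≢ n - i (mod 2)`. Expanding
`h^n_{n-j}` in monomials, every remaining monomial `t^l` has `n - l` odd and `l ≥ n - j + 2`, and
its coefficient `d^j_{n,l}` vanishes because of the factor `n - l - 1 - 2m` in its last product. -/

open Polynomial

theorem Polynomial.sum_range_neg_one_pow_mul_choose_mul_eval_eq_zero {R : Type*} [CommRing R]
    (p : R[X]) {n : ℕ} (hp : p.natDegree < n) :
    ∑ k ∈ range (n + 1), (-1) ^ k * (n.choose k : R) * p.eval (k : R) = 0 := by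
  have hdiff := fwdDiff_iter_eq_sum_shift (1 : R) p.eval n 0
  rw [Polynomial.fwdDiff_iter_eq_zero_of_degree_lt hp, Pi.zero_apply] at hdiff
  have hterm : ∀ k ∈ range (n + 1), ((-1 : ℤ) ^ (n - k) * n.choose k) • p.eval (0 + k • (1 : R))
      = (-1) ^ n * ((-1) ^ k * (n.choose k : R) * p.eval (k : R)) := by
    intro k hk
    have hsign : (-1 : R) ^ n = (-1) ^ (n - k) * (-1) ^ k := by
      rw [← pow_add, Nat.sub_add_cancel (mem_range_succ_iff.mp hk)]
    have hsq : ((-1 : R) ^ k) ^ 2 = 1 := by rw [← pow_mul, pow_mul', neg_one_sq, one_pow]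
    rw [hsign, zsmul_eq_mul, zero_add, nsmul_one]
    push_cast
    linear_combination -(-1 : R) ^ (n - k) * n.choose k * p.eval (k : R) * hsq
  rw [sum_congr rfl hterm, ← mul_sum] at hdiff
  have hsq : ((-1 : R) ^ n) ^ 2 = 1 := by rw [← pow_mul, pow_mul', neg_one_sq, one_pow]
  linear_combination -(-1 : R) ^ n * hdiff
    - (∑ k ∈ range (n + 1), (-1) ^ k * (n.choose k : R) * p.eval (k : R)) * hsq

theorem Polynomial.sum_range_neg_one_pow_mul_choose_mul_eval_div_eq_zero (p : ℝ[X]) {n : ℕ}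
    (hp : p.natDegree ≤ n) {a : ℝ} (ha : 0 < a) (hroot : p.IsRoot (-a)) :
    ∑ k ∈ range (n + 1), (-1) ^ k * (n.choose k : ℝ) * p.eval (k : ℝ) / (k + a) = 0 := by
  obtain ⟨q, rfl⟩ := dvd_iff_isRoot.mpr hroot
  have hterm : ∀ k ∈ range (n + 1), (-1) ^ k * (n.choose k : ℝ) * ((X - C (-a)) * q).eval (k : ℝ)
      / (k + a) = (-1) ^ k * (n.choose k : ℝ) * q.eval (k : ℝ) := by
    intro k _
    have hka : (k : ℝ) + a ≠ 0 := by positivity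
    rw [eval_mul, eval_sub, eval_X, eval_C, sub_neg_eq_add]
    field_simp
  rw [sum_congr rfl hterm]
  rcases eq_or_ne q 0 with rfl | hq
  · simp
  refine q.sum_range_neg_one_pow_mul_choose_mul_eval_eq_zero ?_
  rw [natDegree_mul (X_sub_C_ne_zero _) hq, natDegree_X_sub_C] at hp
  omega

lemma poch_neg_natCast (n k : ℕ) : poch (-(n : ℝ)) k = (-1) ^ k * k.factorial * n.choose k := by
  rw [poch, ascPochhammer_eval_neg_eq_descPochhammer, descPochhammer_eval_eq_descFactorial,
    Nat.descFactorial_eq_factorial_mul_choose, Nat.cast_mul, mul_assoc]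

lemma poch_natCast_add_one_mul_factorial_comm (r k : ℕ) :
    poch ((r : ℝ) + 1) k * r.factorial = poch ((k : ℝ) + 1) r * k.factorial := by
  rw [poch, poch, mul_comm, factorial_mul_ascPochhammer, mul_comm, factorial_mul_ascPochhammer,
    add_comm]

noncomputable def hConst (n i : ℕ) : ℝ :=
  (-1) ^ n * Real.sqrt (2 * (n : ℝ) - 2 * i + 1) / poch (-(n : ℝ)) i / (n - i).factorial

/-- The polynomial part of `d n i k` as a function of `k` (see `d_eq_hConst_mul`); its first factor
comes from `(n - i + 1)_k / k! = (k + 1)_{n - i} / (n - i)!`. -/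
noncomputable def hCoeffPoly (n i : ℕ) : ℝ[X] :=
  (ascPochhammer ℝ (n - i)).comp (X + 1) *
    (∏ m ∈ range ((i + 1) / 2), (X + C ((n : ℝ) + 1 - 2 * m))) *
    ∏ m ∈ range ((i - 1) / 2), (C ((n : ℝ) - 1 - 2 * m) - X)

lemma d_eq_hConst_mul (n i k : ℕ) (hin : i ≤ n) :
    d n i k = hConst n i * ((-1) ^ k * (n.choose k : ℝ) * (hCoeffPoly n i).eval (k : ℝ)) := by
  have hpoch : poch ((n : ℝ) - i + 1) k * (n - i).factorial
      = poch ((k : ℝ) + 1) (n - i) * k.factorial := by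
    rw [← poch_natCast_add_one_mul_factorial_comm, Nat.cast_sub hin]
  have hprod₁ : ∏ m ∈ range ((i + 1) / 2), ((k : ℝ) + ((n : ℝ) + 1 - 2 * m))
      = ∏ m ∈ range ((i + 1) / 2), ((n : ℝ) + k + 1 - 2 * m) :=
    prod_congr rfl fun m _ => by ring
  have hprod₂ : ∏ m ∈ range ((i - 1) / 2), ((n : ℝ) - 1 - 2 * m - k)
      = ∏ m ∈ range ((i - 1) / 2), ((n : ℝ) - k - 1 - 2 * m) :=
    prod_congr rfl fun m _ => by ring
  simp only [d, hConst, hCoeffPoly, eval_mul, eval_prod, eval_comp, eval_add, eval_sub, eval_X,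
    eval_C, eval_one, poch_neg_natCast n k, hprod₁, hprod₂]
  rw [← poch]
  field_simp
  linear_combination (√(2 * ((n : ℝ) - i) + 1) * n.choose k
    * (∏ m ∈ range ((i + 1) / 2), ((n : ℝ) + k + 1 - 2 * m))
    * (∏ m ∈ range ((i - 1) / 2), ((n : ℝ) - k - 1 - 2 * m)) / poch (-(n : ℝ)) i) * hpoch

lemma Polynomial.natDegree_prod_le_card {R ι : Type*} [CommSemiring R] (s : Finset ι)
    (f : ι → R[X]) (hf : ∀ m ∈ s, (f m).natDegree ≤ 1) : (∏ m ∈ s, f m).natDegree ≤ #s :=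
  (natDegree_prod_le s f).trans (by simpa using sum_le_sum hf)

lemma hCoeffPoly_natDegree_le (n i : ℕ) (hi : Odd i) (hin : i ≤ n) :
    (hCoeffPoly n i).natDegree ≤ n := by
  have hpoch : ((ascPochhammer ℝ (n - i)).comp (X + 1)).natDegree ≤ n - i :=
    natDegree_comp_le.trans <| by
      rw [ascPochhammer_natDegree]
      exact mul_le_of_le_one_right (Nat.zero_le _) (by compute_degree!)
  have hplus := natDegree_prod_le_card (range ((i + 1) / 2))
    (fun m => X + C ((n : ℝ) + 1 - 2 * m)) fun m _ => by compute_degree!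
  have hminus := natDegree_prod_le_card (range ((i - 1) / 2))
    (fun m => C ((n : ℝ) - 1 - 2 * m) - X) fun m _ => by compute_degree!
  rw [card_range] at hplus hminus
  refine (natDegree_mul_le.trans (add_le_add natDegree_mul_le hminus)).trans ?_
  obtain ⟨t, rfl⟩ := hi
  omega

lemma hCoeffPoly_isRoot_of_add_lt {n i s : ℕ} (hs : s + i < n) :
    (hCoeffPoly n i).IsRoot (-((s : ℝ) + 1)) := by
  have hpoch : (ascPochhammer ℝ (n - i)).eval (-(s : ℝ)) = 0 :=
    ascPochhammer_eval_neg_coe_nat_of_lt (by omega)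
  simp [hCoeffPoly, eval_comp, hpoch]

lemma hCoeffPoly_isRoot_of_even {n i s : ℕ} (hi : Odd i) (hs : n - s ≤ i) (hsn : s ≤ n)
    (heven : Even (n - s)) : (hCoeffPoly n i).IsRoot (-((s : ℝ) + 1)) := by
  obtain ⟨u, hnu⟩ := heven
  have hn : (n : ℝ) = s + 2 * u := by exact_mod_cast (by omega : n = s + 2 * u)
  have hmem : u ∈ range ((i + 1) / 2) := by
    obtain ⟨t, rfl⟩ := hi
    rw [mem_range]
    omega
  have hfactor : (X + C ((n : ℝ) + 1 - 2 * u)).eval (-((s : ℝ) + 1)) = 0 := by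
    rw [eval_add, eval_X, eval_C, hn]
    ring
  rw [IsRoot, hCoeffPoly, eval_mul, eval_mul, eval_prod, prod_eq_zero hmem hfactor, mul_zero,
    zero_mul]

lemma d_eq_zero {n j l : ℕ} (hodd : Odd (n - l)) (hj : n - l + 2 ≤ j) : d n j l = 0 := by
  obtain ⟨u, hnu⟩ := hodd
  have hn : (n : ℝ) = l + 2 * u + 1 := by exact_mod_cast (by omega : n = l + 2 * u + 1)
  have hmem : u ∈ range ((j - 1) / 2) := by
    rw [mem_range]
    omega
  rw [d, prod_eq_zero hmem (by rw [hn]; ring), mul_zero]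

lemma integral_pow_mul_h (n i s : ℕ) :
    ∫ t in (0 : ℝ)..1, t ^ s * h n i t = ∑ k ∈ range (n + 1), d n i k / (k + s + 1) := by
  simp_rw [h, mul_sum]
  rw [intervalIntegral.integral_finsetSum fun k _ =>
    (by fun_prop : Continuous _).intervalIntegrable _ _]
  refine sum_congr rfl fun k _ => ?_
  simp_rw [mul_left_comm _ (d n i k), ← pow_add]
  rw [intervalIntegral.integral_const_mul, integral_pow]
  push_cast
  ring

lemma integral_pow_mul_h_eq_zero {n i s : ℕ} (hi : Odd i) (hin : i ≤ n) (hsn : s ≤ n)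
    (hs : s + i < n ∨ (n - s ≤ i ∧ Even (n - s))) :
    ∫ t in (0 : ℝ)..1, t ^ s * h n i t = 0 := by
  have hroot : (hCoeffPoly n i).IsRoot (-((s : ℝ) + 1)) := by
    rcases hs with hlow | ⟨hhigh, heven⟩
    · exact hCoeffPoly_isRoot_of_add_lt hlow
    · exact hCoeffPoly_isRoot_of_even hi hhigh hsn heven
  have hsum :=
    (hCoeffPoly n i).sum_range_neg_one_pow_mul_choose_mul_eval_div_eq_zero
    (hCoeffPoly_natDegree_le n i hi hin) (by positivity) hroot
  rw [integral_pow_mul_h]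
  simp_rw [← add_assoc] at hsum
  simp_rw [d_eq_hConst_mul _ _ _ hin, mul_div_assoc (hConst n i), ← mul_sum, hsum, mul_zero]

lemma integral_h_mul_h (n i j : ℕ) :
    ∫ t in (0 : ℝ)..1, h n i t * h n j t
      = ∑ l ∈ range (n + 1), d n j l * ∫ t in (0 : ℝ)..1, t ^ l * h n i t := by
  change ∫ t in (0 : ℝ)..1, h n i t * ∑ l ∈ range (n + 1), d n j l * t ^ l = _
  simp_rw [mul_sum, ← intervalIntegral.integral_const_mul]
  rw [intervalIntegral.integral_finsetSum fun l _ =>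
    (by unfold h; fun_prop : Continuous _).intervalIntegrable _ _]
  refine sum_congr rfl fun l _ => ?_
  congr 1 with t
  ring

theorem stmt_8_general (n i j : ℕ) (hoddi : Odd i) (hoddj : Odd j)
    (hij : i < j) (hjn : j ≤ n) :
    ∫ t in (0:ℝ)..1, h n i t * h n j t = 0 := by
  rw [integral_h_mul_h]
  refine sum_eq_zero fun l hl => ?_
  have hln : l ≤ n := mem_range_succ_iff.mp hl
  have hin : i ≤ n := hij.le.trans hjn
  rcases lt_or_ge (l + i) n with hlow | hhigh
  · rw [integral_pow_mul_h_eq_zero hoddi hin hln (.inl hlow), mul_zero]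
  rcases Nat.even_or_odd (n - l) with heven | hodd
  · rw [integral_pow_mul_h_eq_zero hoddi hin hln (.inr ⟨by omega, heven⟩), mul_zero]
  · have hj : n - l + 2 ≤ j := by
      obtain ⟨a, rfl⟩ := hoddi
      obtain ⟨b, rfl⟩ := hoddj
      omega
    rw [d_eq_zero hodd hj, zero_mul]

theorem stmt_8 (n i j : ℕ) (hoddi : Odd i) (hoddj : Odd j) (hi : 0 < i)
    (hij : i < j) (hjn : j ≤ n) :
    ∫ t in (0:ℝ)..1, h n i t * h n j t = 0 :=
  stmt_8_general n i j hoddi hoddj hij hjn
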